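/- arXiv:1403.1844 — 5 statements merged into one kernel-verified Lean document; each statement's English description precedes it below -/
import Mathlib

section
/- Let n, k, j be integers with 1 ≤ j ≤ k ≤ n, and let x₁, ..., xₙ be real numbers with x₁ + ... + xₙ = 0. For S ⊆ {1,...,n}, write b_S = ∑_{i∈S} xᵢ. Then for every j-element subset S of {1,...,n}: ∑_{T ⊆ {1,...,n}, |T| = k, S ⊆ T} b_T = C(n-j-1, k-j) · b_S. -/
/-!
Write `U` for the complement of `S` in `{1, …, n}`. The supersets in question are the sets
`S ∪ W` with `W` a `(k - j)`-subset of `U`, so their sums total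
`C(n-j, k-j) b_S + C(n-j-1, k-j-1) b_U` by double counting. Since `b_U = -b_S`, Pascal's rule
leaves `C(n-j-1, k-j) b_S`.
-/

open Finset

variable {α M : Type*} [DecidableEq α] [AddCommMonoid M]

-- Double counting: each element of `U` lies in `(#U - 1).choose m` of the `(m + 1)`-subsets.
theorem Finset.sum_powersetCard_succ_sum (U : Finset α) (m : ℕ) (f : α → M) :
    ∑ W ∈ U.powersetCard (m + 1), ∑ i ∈ W, f i = (#U - 1).choose m • ∑ i ∈ U, f i := by
  rw [sum_comm' (t' := U) (s' := fun i => (U.powersetCard (m + 1)).filter (i ∈ ·))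
    (h := by simp +contextual [mem_powersetCard, subset_iff]), smul_sum]
  refine sum_congr rfl fun i hi => ?_
  have hcount : #((U.powersetCard (m + 1)).filter (i ∈ ·)) = (#U - 1).choose m := by
    simpa [singleton_subset_iff] using
      card_filter_powersetCard_subset {i} U (m + 1) (singleton_subset_iff.2 hi) (by simp)
  rw [sum_const, hcount]

theorem Finset.sum_filter_superset_powersetCard {S A : Finset α} {k : ℕ} (hSA : S ⊆ A)
    (hk : #S ≤ k) (g : Finset α → M) :
    ∑ T ∈ (A.powersetCard k).filter (S ⊆ ·), g T =
      ∑ W ∈ (A \ S).powersetCard (k - #S), g (W ∪ S) := by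
  rw [filter_powersetCard_subset S A k hSA hk, sum_image]
  intro W hW V hV hWV
  have hdisj {X : Finset α} (hX : X ∈ (A \ S).powersetCard (k - #S)) : Disjoint X S :=
    disjoint_of_subset_left (mem_powersetCard.1 hX).1 disjoint_sdiff_self_left
  rw [← union_sdiff_cancel_right (hdisj hW), ← union_sdiff_cancel_right (hdisj hV)]
  exact congrArg (· \ S) hWV

theorem Finset.sum_filter_superset_powersetCard_sum {S A : Finset α} {k : ℕ} (hSA : S ⊆ A)
    (hk : #S ≤ k) (f : α → M) :
    ∑ T ∈ (A.powersetCard k).filter (S ⊆ ·), ∑ i ∈ T, f i =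
      ∑ W ∈ (A \ S).powersetCard (k - #S), ∑ i ∈ W, f i +
        (#A - #S).choose (k - #S) • ∑ i ∈ S, f i := by
  rw [sum_filter_superset_powersetCard hSA hk]
  have hsplit : ∀ W ∈ (A \ S).powersetCard (k - #S),
      ∑ i ∈ W ∪ S, f i = ∑ i ∈ W, f i + ∑ i ∈ S, f i := fun W hW =>
    sum_union (disjoint_of_subset_left (mem_powersetCard.1 hW).1 disjoint_sdiff_self_left)
  rw [sum_congr rfl hsplit, sum_add_distrib, sum_const, card_powersetCard, card_sdiff_of_subset hSA]

theorem sum_over_supersets_general (n k j : ℕ) (hjk : j ≤ k) (hkn : k ≤ n)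
    (x : ℕ → ℝ)
    (hsum : ∑ i ∈ Finset.Icc 1 n, x i = 0)
    (S : Finset ℕ) (hS : S ∈ (Finset.Icc 1 n).powersetCard j) :
    ∑ T ∈ ((Finset.Icc 1 n).powersetCard k).filter (fun T => S ⊆ T),
        (∑ i ∈ T, x i) =
      ((n - j - 1).choose (k - j) : ℝ) * ∑ i ∈ S, x i := by
  obtain ⟨hSA, rfl⟩ := mem_powersetCard.1 hS
  have hcompl : ∑ i ∈ Icc 1 n \ S, x i = -∑ i ∈ S, x i := by
    rw [sum_sdiff_eq_sub hSA, hsum, zero_sub]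
  rw [sum_filter_superset_powersetCard_sum hSA hjk, Nat.card_Icc, Nat.add_sub_cancel,
    nsmul_eq_mul]
  cases hm : k - #S with
  | zero => simp
  | succ m =>
    obtain ⟨N, hN⟩ : ∃ N, n - #S = N + 1 := ⟨n - #S - 1, by omega⟩
    rw [sum_powersetCard_succ_sum, card_sdiff_of_subset hSA, Nat.card_Icc, Nat.add_sub_cancel,
      hcompl, nsmul_eq_mul, hN, Nat.add_sub_cancel, Nat.choose_succ_succ']
    push_cast
    ring

theorem sum_over_supersets (n k j : ℕ) (hj : 1 ≤ j) (hjk : j ≤ k) (hkn : k ≤ n)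
    (x : ℕ → ℝ)
    (hsum : ∑ i ∈ Finset.Icc 1 n, x i = 0)
    (S : Finset ℕ) (hS : S ∈ (Finset.Icc 1 n).powersetCard j) :
    ∑ T ∈ ((Finset.Icc 1 n).powersetCard k).filter (fun T => S ⊆ T),
        (∑ i ∈ T, x i) =
      ((n - j - 1).choose (k - j) : ℝ) * ∑ i ∈ S, x i :=
  sum_over_supersets_general n k j hjk hkn x hsum S hS
end

section
/- Let n, k be integers with 1 ≤ k and 2k ≤ n, and let x₁, ..., xₙ be real numbers with x₁ + ... + xₙ = 0. For S ⊆ {1,...,n}, write b_S = ∑_{i∈S} xᵢ. Then for every k-element subset A of {1,...,n}: ∑_{S ⊆ {1,...,n}, |S| = k, |S ∩ A| = 1} b_S = (C(n-k-1, k-1) - (k-1)·C(n-k-1, k-2)) · b_A. Moreover, the coefficient C(n-k-1, k-1) - (k-1)·C(n-k-1, k-2) is nonnegative if and only if n ≥ k². -/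
/-!
A `k`-set meeting `A` in exactly one point is `insert a T` with `a ∈ A` and `T` a `(k-1)`-subset
of the complement `Aᶜ` (of size `n - k`). Summing `b_S` over these, each `a ∈ A` is counted
`C(n-k, k-1)` times, while the `T`-parts contribute `k · C(n-k-1, k-2) · b_{Aᶜ}`, and
`b_{Aᶜ} = -b_A` since all the `xᵢ` sum to zero; Pascal's rule then gives the coefficient.
Its sign follows from `C(m, j+1) · (j+1) = C(m, j) · (m - j)`.
-/

open Finset

section
variable {α M : Type*} [DecidableEq α] [AddCommMonoid M]

theorem sum_powersetCard_sum_eq_choose_smul (s : Finset α) {r : ℕ} (hr : 1 ≤ r) (f : α → M) :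
    ∑ T ∈ s.powersetCard r, ∑ i ∈ T, f i = (#s - 1).choose (r - 1) • ∑ i ∈ s, f i := by
  have hcount : ∀ i ∈ s, #{T ∈ s.powersetCard r | i ∈ T} = (#s - 1).choose (r - 1) := by
    intro i hi
    simpa using card_filter_powersetCard_subset {i} s r (singleton_subset_iff.mpr hi) hr
  rw [sum_comm' (t' := s) (s' := fun i => {T ∈ s.powersetCard r | i ∈ T}), smul_sum]
  · exact sum_congr rfl fun i hi => by rw [sum_const, hcount i hi]
  · intro T i
    simp only [mem_filter, mem_powersetCard]
    exact ⟨fun ⟨⟨hTs, hT⟩, hi⟩ => ⟨⟨⟨hTs, hT⟩, hi⟩, hTs hi⟩, fun ⟨h, _⟩ => ⟨h.1, h.2⟩⟩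

theorem sum_filter_card_inter_eq_one {I A : Finset α} (hAI : A ⊆ I) (r : ℕ)
    (g : Finset α → M) :
    ∑ S ∈ I.powersetCard (r + 1) with #(S ∩ A) = 1, g S =
      ∑ a ∈ A, ∑ T ∈ (I \ A).powersetCard r, g (insert a T) := by
  rw [← sum_product']
  symm
  refine sum_bij (fun p _ => insert p.1 p.2) ?_ ?_ ?_ fun _ _ => rfl
  · rintro ⟨a, T⟩ hp
    simp only [mem_product, mem_powersetCard, subset_sdiff] at hp
    obtain ⟨ha, ⟨hTI, hTA⟩, hT⟩ := hp
    have haT : a ∉ T := fun h => disjoint_left.mp hTA h ha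
    simp [insert_subset (hAI ha) hTI, card_insert_of_notMem haT, hT, insert_inter_of_mem ha,
      disjoint_iff_inter_eq_empty.mp hTA]
  · rintro ⟨a, T⟩ hp ⟨b, U⟩ hq h
    simp only [mem_product, mem_powersetCard, subset_sdiff] at hp hq
    have hab : a = b := by
      simpa [insert_inter_of_mem hp.1, insert_inter_of_mem hq.1,
        disjoint_iff_inter_eq_empty.mp hp.2.1.2, disjoint_iff_inter_eq_empty.mp hq.2.1.2]
        using congrArg (· ∩ A) h
    have hTU : T = U := by
      simpa [insert_sdiff_of_mem _ hp.1, insert_sdiff_of_mem _ hq.1, hp.2.1.2.sdiff_eq_left,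
        hq.2.1.2.sdiff_eq_left] using congrArg (· \ A) h
    rw [hab, hTU]
  · intro S hS
    simp only [mem_filter, mem_powersetCard] at hS
    obtain ⟨⟨hSI, hS⟩, hSA⟩ := hS
    obtain ⟨a, ha⟩ := card_eq_one.mp hSA
    have haS : a ∈ S ∩ A := ha ▸ mem_singleton_self a
    refine ⟨(a, S \ A), ?_, ?_⟩
    · simp only [mem_product, mem_powersetCard, subset_sdiff]
      refine ⟨(mem_inter.mp haS).2, ⟨sdiff_subset.trans hSI, sdiff_disjoint⟩, ?_⟩
      have := card_sdiff_add_card_inter S A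
      omega
    · rw [insert_eq, ← ha, union_comm, sdiff_union_inter]

theorem sum_sum_filter_card_inter_eq_one {I A : Finset α} (hAI : A ⊆ I) (r : ℕ) (f : α → M) :
    ∑ S ∈ I.powersetCard (r + 1) with #(S ∩ A) = 1, ∑ i ∈ S, f i =
      (#(I \ A)).choose r • ∑ a ∈ A, f a +
        #A • ∑ T ∈ (I \ A).powersetCard r, ∑ i ∈ T, f i := by
  rw [sum_filter_card_inter_eq_one hAI]
  have hsplit : ∀ a ∈ A, ∑ T ∈ (I \ A).powersetCard r, ∑ i ∈ insert a T, f i =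
      (#(I \ A)).choose r • f a + ∑ T ∈ (I \ A).powersetCard r, ∑ i ∈ T, f i := by
    intro a ha
    rw [← card_powersetCard, ← sum_const, ← sum_add_distrib]
    refine sum_congr rfl fun T hT => sum_insert fun haT => ?_
    exact (mem_sdiff.mp ((mem_powersetCard.mp hT).1 haT)).2 ha
  rw [sum_congr rfl hsplit, sum_add_distrib, sum_const, smul_sum (s := A)]

end

theorem choose_succ_sub_mul_choose_nonneg_iff {m j : ℕ} (h : j ≤ m) :
    (0 : ℝ) ≤ m.choose (j + 1) - (j + 1) * m.choose j ↔ (j + 1) ^ 2 + j ≤ m := by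
  have hpos : (0 : ℝ) < m.choose j := by exact_mod_cast Nat.choose_pos h
  have hrec : (m.choose (j + 1) : ℝ) * (j + 1) = m.choose j * (m - j) := by
    exact_mod_cast Nat.choose_succ_right_eq m j
  have hscaled : ((m.choose (j + 1) : ℝ) - (j + 1) * m.choose j) * (j + 1) =
      m.choose j * ((m - j) - (j + 1) ^ 2) := by
    linear_combination hrec
  rw [← mul_nonneg_iff_of_pos_right (by positivity : (0 : ℝ) < j + 1), hscaled,
    mul_nonneg_iff_of_pos_left hpos, sub_nonneg, le_sub_iff_add_le]
  exact_mod_cast Iff.rfl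

theorem sum_over_single_intersection (n k : ℕ) (hk : 1 ≤ k) (hn : 2 * k ≤ n)
    (x : ℕ → ℝ)
    (hsum : ∑ i ∈ Finset.Icc 1 n, x i = 0)
    (A : Finset ℕ) (hA : A ∈ (Finset.Icc 1 n).powersetCard k) :
    (∑ S ∈ ((Finset.Icc 1 n).powersetCard k).filter
          (fun S => (S ∩ A).card = 1), (∑ i ∈ S, x i) =
        (((n - k - 1).choose (k - 1) : ℝ) -
            ((k : ℝ) - 1) * ((n - k - 1).choose (k - 2) : ℝ)) * ∑ i ∈ A, x i) ∧
      (0 ≤ ((n - k - 1).choose (k - 1) : ℝ) -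
            ((k : ℝ) - 1) * ((n - k - 1).choose (k - 2) : ℝ) ↔ k ^ 2 ≤ n) := by
  obtain ⟨hAI, hAk⟩ := mem_powersetCard.mp hA
  have hcard : #(Icc 1 n \ A) = n - k := by simp [card_sdiff_of_subset hAI, hAk]
  have hcompl : ∑ i ∈ Icc 1 n \ A, x i = -∑ i ∈ A, x i := by
    rw [sum_sdiff_eq_sub hAI, hsum, zero_sub]
  obtain ⟨r, rfl⟩ : ∃ r, k = r + 1 := ⟨k - 1, by omega⟩
  rw [sum_sum_filter_card_inter_eq_one hAI, hcard, hAk]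
  rcases r with _ | r
  · simpa using (show 1 ≤ n by omega)
  · obtain ⟨m, hm⟩ : ∃ m, n - (r + 2) = m + 1 := ⟨n - (r + 2) - 1, by omega⟩
    rw [sum_powersetCard_sum_eq_choose_smul _ (by omega), hcard, hcompl]
    simp only [hm, Nat.add_sub_cancel, Nat.choose_succ_succ, nsmul_eq_mul]
    rw [show r + 1 + 1 - 2 = r by omega]
    push_cast
    refine ⟨by ring, ?_⟩
    rw [show (r : ℝ) + 1 + 1 - 1 = r + 1 by ring, choose_succ_sub_mul_choose_nonneg_iff (by omega)]
    rw [show (r + 1 + 1) ^ 2 = (r + 1) ^ 2 + 2 * r + 3 by ring]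
    omega
end

section
/- Let n, k be positive integers with k ≥ 1 and n ≥ k², and let x₁ ≥ x₂ ≥ ... ≥ xₙ be real numbers, not all zero, with x₁ + x₂ + ... + xₙ = 0. If the number of k-element subsets of {1,...,n} with nonnegative sum is at most C(n-1, k-1), then the number N of k-element subsets S with 1 ∈ S and ∑_{i∈S} xᵢ ≥ 0 satisfies (N : ℝ) ≥ (1 - (6k-3)(k-1)/(n-2k+1)) · C(n-1, k-1). -/
/-!
Write `I = {2, …, n}`. A `k`-set through `1` is either nonnegative or of the form `insert 1 T`
with `T` a `(k-1)`-subset of `I` and `x₁ + ∑_T x < 0`; if `b` counts these `T`, then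
`N + b = C(n-1, k-1)`, and the hypothesis says that at most `b` of the `k`-subsets of `I` are
nonnegative.

For such a `T` and `j ∈ I \ T`, the negative part of `∑_{T ∪ {j}} x` is at least
`-(x_j + ∑_T x)`; as `∑_I x = -x₁`, summing over `j` gives at least `(n - k) x₁`. Each
`k`-subset `F` of `I` arises from at most `k` pairs `(T, j)`, while
`∑_F (∑_F x)⁻ = ∑_F (∑_F x)⁺ + C(n-2, k-1) x₁ ≤ (k b + C(n-1, k-1)) x₁` because `x₁` is the
largest entry. Hence `b (n - k - k²) ≤ k C(n-1, k-1)`, which yields the bound.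
-/

open Finset

namespace Finset

variable {α : Type*} [DecidableEq α]

theorem sum_powersetCard_sum {β : Type*} [AddCommMonoid β] (s : Finset α) (r : ℕ) (g : α → β) :
    ∑ F ∈ s.powersetCard (r + 1), ∑ i ∈ F, g i = (#s - 1).choose r • ∑ i ∈ s, g i := by
  rw [sum_comm' (t' := s) (s' := fun i => (s.powersetCard (r + 1)).filter ({i} ⊆ ·)), smul_sum]
  · refine sum_congr rfl fun i hi => ?_
    rw [sum_const, card_filter_powersetCard_subset _ _ _ (by simpa) (by simp), card_singleton,
      Nat.add_sub_cancel]
  · intro F i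
    simp only [mem_powersetCard, mem_filter, singleton_subset_iff]
    constructor
    · rintro ⟨⟨hF, hc⟩, hi⟩; exact ⟨⟨⟨hF, hc⟩, hi⟩, hF hi⟩
    · rintro ⟨⟨⟨hF, hc⟩, hi⟩, -⟩; exact ⟨⟨hF, hc⟩, hi⟩

theorem sum_sum_sdiff_insert_le {I : Finset α} {B : Finset (Finset α)} {r : ℕ}
    (hB : B ⊆ I.powersetCard r) {f : Finset α → ℝ} (hf : ∀ F ∈ I.powersetCard (r + 1), 0 ≤ f F) :
    ∑ T ∈ B, ∑ j ∈ I \ T, f (insert j T) ≤ (r + 1) * ∑ F ∈ I.powersetCard (r + 1), f F := by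
  have hins : ∀ T ∈ B, ∑ j ∈ I \ T, f (insert j T) = ∑ F ∈ (I \ T).image (insert · T), f F :=
    fun T _ => (sum_image fun j hj j' _ h => (insert_inj (mem_sdiff.1 hj).2).1 h).symm
  rw [sum_congr rfl hins, mul_sum,
    sum_comm' (t' := I.powersetCard (r + 1)) (s' := fun F => B.filter (· ⊆ F))]
  · refine sum_le_sum fun F hF => ?_
    rw [sum_const, nsmul_eq_mul]
    refine mul_le_mul_of_nonneg_right ?_ (hf F hF)
    have : B.filter (· ⊆ F) ⊆ F.powersetCard r := fun T hT => by grind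
    exact_mod_cast (card_le_card this).trans (by simp [(mem_powersetCard.1 hF).2])
  · intro T F
    simp only [mem_image, mem_filter, mem_sdiff]
    constructor
    · rintro ⟨hT, j, ⟨hjI, hjT⟩, rfl⟩
      have := mem_powersetCard.1 (hB hT)
      refine ⟨⟨hT, subset_insert _ _⟩, mem_powersetCard.2 ⟨insert_subset hjI this.1, ?_⟩⟩
      rw [card_insert_of_notMem hjT, this.2]
    · rintro ⟨⟨hT, hTF⟩, hF⟩
      obtain ⟨j, hjT, rfl⟩ := exists_eq_insert_iff.2 ⟨hTF, by
        rw [(mem_powersetCard.1 (hB hT)).2, (mem_powersetCard.1 hF).2]⟩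
      exact ⟨hT, j, ⟨(mem_powersetCard.1 hF).1 (mem_insert_self _ _), hjT⟩, rfl⟩

variable {I : Finset α} {a : α}

theorem card_filter_powersetCard_insert (ha : a ∉ I) (p : Finset α → Prop) [DecidablePred p]
    (r : ℕ) :
    #{S ∈ (insert a I).powersetCard (r + 1) | p S} =
      #{F ∈ I.powersetCard (r + 1) | p F} + #{T ∈ I.powersetCard r | p (insert a T)} := by
  have haT : ∀ T ∈ I.powersetCard r, a ∉ T := fun T hT h => ha ((mem_powersetCard.1 hT).1 h)
  rw [powersetCard_succ_insert ha, filter_union, filter_image, card_union_of_disjoint,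
    card_image_of_injOn]
  · intro T hT T' hT' h
    rw [← erase_insert (haT T (mem_filter.1 hT).1), ← erase_insert (haT T' (mem_filter.1 hT').1)]
    exact congrArg (·.erase a) h
  · refine disjoint_left.2 fun F hF hF' => ?_
    obtain ⟨T, -, rfl⟩ := mem_image.1 hF'
    exact ha ((mem_powersetCard.1 (mem_filter.1 hF).1).1 (mem_insert_self a T))

theorem card_filter_powersetCard_insert_mem (ha : a ∉ I) (p : Finset α → Prop) [DecidablePred p]
    (r : ℕ) :
    #{S ∈ (insert a I).powersetCard (r + 1) | a ∈ S ∧ p S} =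
      #{T ∈ I.powersetCard r | p (insert a T)} := by
  rw [card_filter_powersetCard_insert ha, filter_false_of_mem fun F hF h =>
    ha ((mem_powersetCard.1 hF).1 h.1)]
  simp

end Finset

theorem pos_of_sum_eq_zero_of_le {α : Type*} {x : α → ℝ} {s : Finset α} {M : ℝ}
    (hle : ∀ i ∈ s, x i ≤ M) (hsum : ∑ i ∈ s, x i = 0) (hne : ∃ i ∈ s, x i ≠ 0) : 0 < M := by
  by_contra! hM
  obtain ⟨i, hi, hxi⟩ := hne
  exact hxi ((sum_eq_zero_iff_of_nonpos fun j hj => (hle j hj).trans hM).1 hsum i hi)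

theorem one_sub_div_mul_add_le {r m a b : ℝ} (hr : 1 ≤ r) (hm : (r + 1) ^ 2 ≤ m + 1)
    (ha : 0 ≤ a) (hb : 0 ≤ b) (hcount : b * (m - r - (r + 1) ^ 2) ≤ (r + 1) * (a + b)) :
    (1 - (6 * r + 3) * r / (m - 2 * r)) * (a + b) ≤ a := by
  have hD : 0 < m - 2 * r := by nlinarith
  suffices b * (m - 2 * r) ≤ (6 * r + 3) * r * (a + b) by
    rw [sub_mul, one_mul, div_mul_eq_mul_div, sub_le_comm, add_sub_cancel_left, le_div_iff₀ hD]
    exact this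
  rcases le_or_gt (m - 2 * r) ((6 * r + 3) * r) with hsmall | hlarge
  · nlinarith [mul_le_mul_of_nonneg_left hsmall hb]
  · have h3 : m - 2 * r ≤ 3 * (m - r - (r + 1) ^ 2) := by nlinarith
    have hr3 : 3 * (r + 1) ≤ (6 * r + 3) * r := by nlinarith
    nlinarith [mul_le_mul_of_nonneg_left h3 hb, mul_le_mul_of_nonneg_right hr3 (add_nonneg ha hb)]

section

variable {α : Type*} [DecidableEq α] {I : Finset α} {a : α} {x : α → ℝ}

theorem card_sdiff_mul_le_sum_negPart (hzero : ∑ i ∈ I, x i = -x a)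
    {T : Finset α} (hT : T ⊆ I) (hneg : x a + ∑ i ∈ T, x i < 0) :
    #(I \ T) * x a ≤ ∑ j ∈ I \ T, (x j + ∑ i ∈ T, x i)⁻ := by
  have hm : (1 : ℝ) ≤ #(I \ T) := by
    refine Nat.one_le_cast.2 (card_pos.2 (nonempty_iff_ne_empty.2 fun h => ?_))
    rw [subset_antisymm hT (sdiff_eq_empty_iff_subset.1 h), hzero] at hneg
    linarith
  calc (#(I \ T) : ℝ) * x a ≤ ∑ j ∈ I \ T, -(x j + ∑ i ∈ T, x i) := by
        rw [sum_neg_distrib, sum_add_distrib, sum_const, sum_sdiff_eq_sub hT, hzero, nsmul_eq_mul]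
        nlinarith
    _ ≤ ∑ j ∈ I \ T, (x j + ∑ i ∈ T, x i)⁻ := sum_le_sum fun j _ => neg_le_negPart _

theorem sum_negPart_le (hzero : ∑ i ∈ I, x i = -x a) (hmax : ∀ i ∈ I, x i ≤ x a) (r : ℕ) :
    ∑ F ∈ I.powersetCard (r + 1), (∑ i ∈ F, x i)⁻ ≤
      ((r + 1) * #{F ∈ I.powersetCard (r + 1) | 0 ≤ ∑ i ∈ F, x i} + (#I - 1).choose r) * x a := by
  have hpos : ∑ F ∈ I.powersetCard (r + 1), (∑ i ∈ F, x i)⁺ ≤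
      #{F ∈ I.powersetCard (r + 1) | 0 ≤ ∑ i ∈ F, x i} * ((r + 1) * x a) := by
    rw [← sum_filter_of_ne fun F _ h => (posPart_pos_iff.1 (h.symm.lt_of_le (posPart_nonneg _))).le,
      ← nsmul_eq_mul]
    refine sum_le_card_nsmul _ _ _ fun F hF => ?_
    obtain ⟨hF, hnn⟩ := mem_filter.1 hF
    obtain ⟨hFI, hcard⟩ := mem_powersetCard.1 hF
    rw [posPart_eq_self.2 hnn]
    calc ∑ i ∈ F, x i ≤ #F • x a := sum_le_card_nsmul F x (x a) fun i hi => hmax i (hFI hi)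
      _ = (r + 1) * x a := by rw [hcard, nsmul_eq_mul]; push_cast; ring
  have hneg (F : Finset α) : (∑ i ∈ F, x i)⁻ = (∑ i ∈ F, x i)⁺ - ∑ i ∈ F, x i := by
    linarith [posPart_sub_negPart (∑ i ∈ F, x i)]
  rw [sum_congr rfl fun F _ => hneg F, sum_sub_distrib, sum_powersetCard_sum, hzero, nsmul_eq_mul]
  linarith

theorem card_filter_sum_insert_neg_mul_le (ha : a ∉ I) (hzero : ∑ i ∈ I, x i = -x a)
    (hmax : ∀ i ∈ I, x i ≤ x a) (hpos : 0 < x a) (r : ℕ) :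
    #{T ∈ I.powersetCard r | ∑ i ∈ insert a T, x i < 0} * ((#I : ℝ) - r) ≤
      (r + 1) ^ 2 * #{F ∈ I.powersetCard (r + 1) | 0 ≤ ∑ i ∈ F, x i} +
        (r + 1) * (#I - 1).choose r := by
  set B := {T ∈ I.powersetCard r | ∑ i ∈ insert a T, x i < 0}
  have hT : ∀ T ∈ B, (#I - r) * x a ≤ ∑ j ∈ I \ T, (∑ i ∈ insert j T, x i)⁻ := by
    intro T hT
    obtain ⟨⟨hTI, hTr⟩, hneg⟩ := And.imp_left mem_powersetCard.1 (mem_filter.1 hT)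
    rw [sum_insert fun h => ha (hTI h)] at hneg
    have h := card_sdiff_mul_le_sum_negPart hzero hTI hneg
    rw [card_sdiff_of_subset hTI, Nat.cast_sub (card_le_card hTI), hTr] at h
    exact h.trans_eq (sum_congr rfl fun j hj => by rw [sum_insert (mem_sdiff.1 hj).2])
  refine le_of_mul_le_mul_right ?_ hpos
  calc #B * ((#I : ℝ) - r) * x a = #B • ((#I - r) * x a) := by rw [nsmul_eq_mul, mul_assoc]
    _ ≤ ∑ T ∈ B, ∑ j ∈ I \ T, (∑ i ∈ insert j T, x i)⁻ := card_nsmul_le_sum _ _ _ hT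
    _ ≤ (r + 1) * ∑ F ∈ I.powersetCard (r + 1), (∑ i ∈ F, x i)⁻ :=
      sum_sum_sdiff_insert_le (f := fun F => (∑ i ∈ F, x i)⁻) (filter_subset _ _)
        fun F _ => negPart_nonneg _
    _ ≤ (r + 1) * (((r + 1) * #{F ∈ I.powersetCard (r + 1) | 0 ≤ ∑ i ∈ F, x i} +
          (#I - 1).choose r) * x a) :=
      mul_le_mul_of_nonneg_left (sum_negPart_le hzero hmax r) (by positivity)
    _ = _ := by ring

theorem one_sub_div_mul_choose_le_card_filter_mem (ha : a ∉ I) (hzero : ∑ i ∈ I, x i = -x a)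
    (hmax : ∀ i ∈ I, x i ≤ x a) (hpos : 0 < x a) {r : ℕ} (hr : (r + 1) ^ 2 ≤ #I + 1)
    (hfew : #{S ∈ (insert a I).powersetCard (r + 1) | 0 ≤ ∑ i ∈ S, x i} ≤ (#I).choose r) :
    (1 - (6 * r + 3) * r / (#I - 2 * r)) * (#I).choose r ≤
      (#{S ∈ (insert a I).powersetCard (r + 1) | a ∈ S ∧ 0 ≤ ∑ i ∈ S, x i} : ℝ) := by
  have hcount := card_filter_sum_insert_neg_mul_le ha hzero hmax hpos r
  rw [card_filter_powersetCard_insert ha] at hfew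
  rw [card_filter_powersetCard_insert_mem ha]
  set A := #{T ∈ I.powersetCard r | 0 ≤ ∑ i ∈ insert a T, x i}
  set B := #{T ∈ I.powersetCard r | ∑ i ∈ insert a T, x i < 0}
  set G := #{F ∈ I.powersetCard (r + 1) | 0 ≤ ∑ i ∈ F, x i}
  have hsplit : A + B = (#I).choose r := by
    simp_rw [A, B, ← not_le]
    rw [card_filter_add_card_filter_not, card_powersetCard]
  rw [← hsplit] at hfew ⊢
  push_cast
  rcases Nat.eq_zero_or_pos r with rfl | hr0
  · simp [B, hpos.le]
  have hGB : (G : ℝ) ≤ B := by exact_mod_cast (by omega : G ≤ B)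
  have hchoose : ((#I - 1).choose r : ℝ) ≤ A + B := by
    rw [← Nat.cast_add, hsplit, Nat.cast_le]
    exact Nat.choose_le_choose r (Nat.sub_le _ _)
  refine one_sub_div_mul_add_le (by exact_mod_cast hr0) (by exact_mod_cast hr)
    (by positivity) (by positivity) ?_
  nlinarith [mul_le_mul_of_nonneg_left hGB (sq_nonneg ((r : ℝ) + 1)),
    mul_le_mul_of_nonneg_left hchoose (by positivity : (0 : ℝ) ≤ r + 1)]

end

theorem many_nonneg_on_first (n k : ℕ) (hk : 1 ≤ k) (hn : k ^ 2 ≤ n)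
    (x : ℕ → ℝ)
    (hdec : ∀ i j, 1 ≤ i → i ≤ j → j ≤ n → x j ≤ x i)
    (hne : ∃ i ∈ Finset.Icc 1 n, x i ≠ 0)
    (hsum : ∑ i ∈ Finset.Icc 1 n, x i = 0)
    (hfew : (((Finset.Icc 1 n).powersetCard k).filter
        (fun S => 0 ≤ ∑ i ∈ S, x i)).card ≤ (n - 1).choose (k - 1)) :
    ((((Finset.Icc 1 n).powersetCard k).filter
        (fun S => 1 ∈ S ∧ 0 ≤ ∑ i ∈ S, x i)).card : ℝ) ≥
      (1 - ((6 * (k : ℝ) - 3) * ((k : ℝ) - 1)) / ((n : ℝ) - 2 * k + 1)) *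
        ((n - 1).choose (k - 1) : ℝ) := by
  obtain ⟨r, rfl⟩ : ∃ r, k = r + 1 := ⟨k - 1, by omega⟩
  have hn1 : 1 ≤ n := by nlinarith
  have hmax : ∀ i ∈ Icc 1 n, x i ≤ x 1 := fun i hi =>
    hdec 1 i le_rfl (mem_Icc.1 hi).1 (mem_Icc.1 hi).2
  have hpos := pos_of_sum_eq_zero_of_le hmax hsum hne
  set I := Icc 2 n with hI
  have h1 : 1 ∉ I := by simp [hI]
  have hIcc : Icc 1 n = insert 1 I := (insert_Icc_add_one_left_eq_Icc hn1).symm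
  have hcard : #I = n - 1 := by simp [hI]
  rw [hIcc, sum_insert h1] at hsum
  rw [hIcc, Nat.add_sub_cancel, ← hcard] at hfew
  have key := one_sub_div_mul_choose_le_card_filter_mem h1 (eq_neg_of_add_eq_zero_right hsum)
    (fun i hi => hmax i (hIcc ▸ mem_insert_of_mem hi)) hpos (by omega) hfew
  rw [hcard, Nat.cast_sub hn1, Nat.cast_one] at key
  rw [hIcc, Nat.add_sub_cancel, ge_iff_le]
  convert key using 4 <;> push_cast <;> ring
end

section
/- Let k, m be positive integers with m ≥ 1, let N = m·k, and let y₁, ..., y_N be real numbers with y₁ + ... + y_N > 0. Then the number of k-element subsets S of {1,...,N} with ∑_{i∈S} yᵢ ≥ 0 is at least C(N-1, k-1). -/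
/-!
Cut the ground set into `m` blocks of size `k`. For every permutation `σ` the images of the
blocks again partition the ground set, so one of them has nonnegative sum. On the other hand
`σ ↦ σ • B` hits every `k`-set equally often, so for each block the proportion of permutations
sending it into the family `𝒜` of nonnegative `k`-sets is `#𝒜 / C(N, k)`. Counting pairs (permutation, block)
gives `C(N, k) ≤ m · #𝒜`, and `C(N, k) = m · C(N - 1, k - 1)` when `N = m k`.
-/

open Finset Equiv
open scoped Nat Pointwise

namespace Equiv.Perm

variable {α : Type*} [Fintype α] [DecidableEq α]

lemma exists_smul_finset_eq {s t : Finset α} (h : #s = #t) : ∃ σ : Perm α, σ • s = t := by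
  let e : s ≃ t := equivOfCardEq h
  refine ⟨e.extendSubtype,
    eq_of_subset_of_card_le (fun x hx => ?_) (by rw [card_smul_finset, h])⟩
  obtain ⟨a, ha, rfl⟩ := mem_smul_finset.1 hx
  exact e.extendSubtype_mem a ha

lemma card_filter_smul_finset_eq {B S : Finset α} (hS : #S = #B) :
    #{σ : Perm α | σ • B = S} = #{σ : Perm α | σ • B = B} := by
  obtain ⟨τ, hτ⟩ := exists_smul_finset_eq hS.symm
  refine (card_equiv (Equiv.mulLeft τ) fun σ => ?_).symm
  simp [mul_smul, ← hτ]

lemma card_filter_smul_finset_mem {B : Finset α} {𝒜 : Finset (Finset α)}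
    (h𝒜 : ∀ S ∈ 𝒜, #S = #B) :
    #{σ : Perm α | σ • B ∈ 𝒜} = #𝒜 * #{σ : Perm α | σ • B = B} := by
  rw [card_eq_sum_card_fiberwise (s := {σ : Perm α | σ • B ∈ 𝒜}) (f := (· • B)) (t := 𝒜)
    (fun σ hσ => (mem_filter.1 hσ).2), ← smul_eq_mul, ← sum_const]
  refine sum_congr rfl fun S hS => ?_
  rw [filter_filter, ← card_filter_smul_finset_eq (h𝒜 S hS)]
  congr 1
  exact filter_congr fun σ _ => and_iff_right_of_imp fun h => h ▸ hS

lemma card_filter_smul_finset_mem_mul_choose {B : Finset α} {𝒜 : Finset (Finset α)}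
    (h𝒜 : ∀ S ∈ 𝒜, #S = #B) :
    #{σ : Perm α | σ • B ∈ 𝒜} * (Fintype.card α).choose #B = #𝒜 * (Fintype.card α)! := by
  have hall := card_filter_smul_finset_mem (B := B) (𝒜 := powersetCard #B univ)
      fun _ => mem_powersetCard_univ.1
  rw [card_powersetCard, Finset.card_univ, filter_true_of_mem (fun σ _ => by simp),
    Finset.card_univ, Fintype.card_perm] at hall
  rw [card_filter_smul_finset_mem h𝒜, hall]
  ring

end Equiv.Perm

theorem choose_le_card_mul_card_filter_sum_nonneg {α ι M : Type*} [Fintype α] [DecidableEq α]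
    [Fintype ι] [DecidableEq ι] [AddCommMonoid M] [LinearOrder M] [IsOrderedAddMonoid M]
    (g : α → ι) {k : ℕ} (hg : ∀ j, #{a | g a = j} = k) (y : α → M) (hy : 0 < ∑ a, y a) :
    (Fintype.card α).choose k ≤
      Fintype.card ι * #{S ∈ powersetCard k univ | 0 ≤ ∑ i ∈ S, y i} := by
  set 𝒜 : Finset (Finset α) := {S ∈ powersetCard k univ | 0 ≤ ∑ i ∈ S, y i}
  set N := Fintype.card α
  set B : ι → Finset α := fun j => {a | g a = j}
  have hblock (σ : Perm α) : ∃ j, σ • B j ∈ 𝒜 := by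
    have : ∑ _j : ι, (0 : M) < ∑ j, ∑ a with g a = j, y (σ a) := by
      simpa [sum_fiberwise, Equiv.sum_comp] using hy
    obtain ⟨j, -, hj⟩ := exists_lt_of_sum_lt this
    refine ⟨j, mem_filter.2 ⟨mem_powersetCard_univ.2 (by rw [card_smul_finset, hg]), ?_⟩⟩
    simpa [B, smul_finset_def, sum_image] using hj.le
  have hcount : N ! ≤ ∑ j, #{σ : Perm α | σ • B j ∈ 𝒜} := by
    calc N ! = ∑ _σ : Perm α, 1 := by simp [N, Fintype.card_perm]
      _ ≤ ∑ σ : Perm α, #{j | σ • B j ∈ 𝒜} :=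
        sum_le_sum fun σ _ =>
          card_pos.2 <| (hblock σ).imp fun j hj => mem_filter.2 ⟨mem_univ _, hj⟩
      _ = ∑ j, #{σ : Perm α | σ • B j ∈ 𝒜} := by
        simp only [card_filter]
        exact sum_comm
  have hmem (S : Finset α) (hS : S ∈ 𝒜) : #S = k := (mem_powersetCard.1 (mem_filter.1 hS).1).2
  refine le_of_mul_le_mul_left ?_ N.factorial_pos
  calc N ! * N.choose k ≤ ∑ j, #{σ : Perm α | σ • B j ∈ 𝒜} * N.choose k := by
        rw [← sum_mul]; gcongr
    _ = ∑ _j : ι, #𝒜 * N ! := sum_congr rfl fun j _ => by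
        rw [← hg j]
        exact Perm.card_filter_smul_finset_mem_mul_choose fun S hS => by rw [hg, hmem S hS]
    _ = N ! * (Fintype.card ι * #𝒜) := by simp; ring

theorem Finset.choose_card_le_mul_card_filter_sum_nonneg {ι M : Type*} [DecidableEq ι]
    [AddCommMonoid M] [LinearOrder M] [IsOrderedAddMonoid M]
    (s : Finset ι) {m k : ℕ} (hs : #s = m * k) (y : ι → M) (hy : 0 < ∑ i ∈ s, y i) :
    (#s).choose k ≤ m * #{S ∈ s.powersetCard k | 0 ≤ ∑ i ∈ S, y i} := by
  let e : s ≃ Fin m × Fin k := Fintype.equivOfCardEq (by simp [hs])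
  have hblock (j : Fin m) : #{a : s | (e a).1 = j} = k := by
    rw [card_equiv e (t := {p : Fin m × Fin k | p.1 = j}) (by simp), ← univ_product_univ,
      filter_product_left (· = j), card_product]
    simp [filter_eq']
  have := choose_le_card_mul_card_filter_sum_nonneg (fun a => (e a).1) hblock (fun a => y a)
    (by rwa [sum_coe_sort])
  rw [Fintype.card_coe, Fintype.card_fin] at this
  convert this using 2
  conv_lhs => rw [← s.attach_map_val, powersetCard_map, filter_map, card_map]
  rw [univ_eq_attach]
  congr 1
  exact filter_congr fun S _ => by simp

theorem averaging_bound (k m : ℕ) (hk : 0 < k) (hm : 1 ≤ m)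
    (y : ℕ → ℝ)
    (hsum : 0 < ∑ i ∈ Finset.Icc 1 (m * k), y i) :
    (m * k - 1).choose (k - 1) ≤
      (((Finset.Icc 1 (m * k)).powersetCard k).filter
        (fun S => 0 ≤ ∑ i ∈ S, y i)).card := by
  have hcard : #(Icc 1 (m * k)) = m * k := by simp
  have hbound := (Icc 1 (m * k)).choose_card_le_mul_card_filter_sum_nonneg hcard y hsum
  obtain ⟨l, rfl⟩ : ∃ l, k = l + 1 := ⟨k - 1, by omega⟩
  obtain ⟨n, hn⟩ : ∃ n, m * (l + 1) = n + 1 :=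
    ⟨m * (l + 1) - 1, by have := Nat.mul_pos hm hk; omega⟩
  have hchoose : (n + 1).choose (l + 1) = m * n.choose l := by
    refine Nat.eq_of_mul_eq_mul_right hk ?_
    rw [← Nat.add_one_mul_choose_eq, ← hn]
    ring
  rw [hcard, hn, hchoose] at hbound
  rw [hn, Nat.add_sub_cancel, Nat.add_sub_cancel]
  exact Nat.le_of_mul_le_mul_left hbound hm
end

section
/- Let n, k be integers with 1 ≤ k and 2k ≤ n. Then, as real numbers, C(n-2k, k-1) ≥ (1 - (2k-1)(k-1)/(n-2k+1)) · C(n-1, k-1). -/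
lemma binom_aux (m r : ℕ) : ∀ t : ℕ,
    ((m - t).choose r : ℝ) ≥ (m.choose r : ℝ) - t * (m.choose (r - 1) : ℝ) := by
  intro t
  induction t with
  | zero => simp
  | succ t ih =>
    have hmono : ((m - (t + 1)).choose (r - 1) : ℝ) ≤ (m.choose (r - 1) : ℝ) := by
      exact_mod_cast Nat.cast_le.mpr (Nat.choose_le_choose _ (by omega))
    have key : ((m - (t + 1)).choose r : ℝ)
        ≥ ((m - t).choose r : ℝ) - ((m - (t + 1)).choose (r - 1) : ℝ) := by
      rcases Nat.eq_zero_or_pos (m - t) with h | h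
      · have h1 : m - (t + 1) = m - t := by omega
        rw [h1]
        have : (0 : ℝ) ≤ ((m - t).choose (r - 1) : ℝ) := Nat.cast_nonneg _
        linarith
      · rcases Nat.eq_zero_or_pos r with hr | hr
        · subst hr
          simp
        · have hkey : (m - t).choose r ≤ (m - (t + 1)).choose r + (m - (t + 1)).choose (r - 1) := by
            have hp := Nat.choose_succ_succ (m - (t + 1)) (r - 1)
            have h1 : m - (t + 1) + 1 = m - t := by omega
            have h2 : (r - 1) + 1 = r := by omega
            simp only [Nat.succ_eq_add_one] at hp
            rw [h1, h2] at hp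
            omega
          have := (Nat.cast_le (α := ℝ)).mpr hkey
          push_cast at this
          linarith
    push_cast
    linarith

theorem binom_lower_bound (n k : ℕ) (hk : 1 ≤ k) (hn : 2 * k ≤ n) :
    ((n - 2 * k).choose (k - 1) : ℝ) ≥
      (1 - (2 * (k : ℝ) - 1) * ((k : ℝ) - 1) / ((n : ℝ) - 2 * k + 1)) *
        ((n - 1).choose (k - 1) : ℝ) := by
  rcases Nat.eq_or_lt_of_le hk with h1 | h2
  · -- k = 1
    subst h1
    simp
  · -- k ≥ 2
    have hk2 : 2 ≤ k := h2
    have hmt : n - 2 * k = (n - 1) - (2 * k - 1) := by omega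
    have haux := binom_aux (n - 1) (k - 1) (2 * k - 1)
    rw [← hmt] at haux
    -- identity: C(n-1, k-1) * (k-1) = C(n-1, k-2) * (n - k + 1)
    have hid : (n - 1).choose (k - 1) * (k - 1) = (n - 1).choose (k - 2) * (n - k + 1) := by
      have h2' : k - 1 = (k - 2) + 1 := by omega
      have := Nat.choose_succ_right_eq (n - 1) (k - 2)
      rw [← h2'] at this
      have h3 : (n - 1) - (k - 2) = n - k + 1 := by omega
      rw [h3] at this
      exact this
    have hidR : ((n - 1).choose (k - 1) : ℝ) * ((k : ℝ) - 1)
        = ((n - 1).choose (k - 2) : ℝ) * ((n : ℝ) - k + 1) := by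
      have := congrArg (Nat.cast (R := ℝ)) hid
      push_cast at this
      have hkc : ((k : ℝ) - 1) = ((k - 1 : ℕ) : ℝ) := by
        have : (1 : ℕ) ≤ k := hk
        push_cast [this]
        ring
      have hnc : ((n : ℝ) - k + 1) = ((n - k + 1 : ℕ) : ℝ) := by
        have hkn : k ≤ n := by omega
        push_cast [hkn]
        ring
      rw [hkc, hnc]
      exact_mod_cast hid
    set A := ((n - 1).choose (k - 1) : ℝ) with hA
    set B := ((n - 1).choose (k - 2) : ℝ) with hB
    have hBnn : 0 ≤ B := Nat.cast_nonneg _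
    have hAnn : 0 ≤ A := Nat.cast_nonneg _
    have hden1 : (0 : ℝ) < (n : ℝ) - 2 * k + 1 := by
      have : (2 * k : ℝ) ≤ n := by exact_mod_cast hn
      linarith
    have hden2 : (0 : ℝ) < (n : ℝ) - k + 1 := by
      have : (k : ℝ) ≤ n := by exact_mod_cast (by omega : k ≤ n)
      linarith
    -- from haux: LHS ≥ A - (2k-1) * (choose (n-1) (k-1-1))
    have hk1 : (k - 1) - 1 = k - 2 := by omega
    rw [hk1] at haux
    have hcast : ((2 * k - 1 : ℕ) : ℝ) = 2 * (k : ℝ) - 1 := by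
      have : (1 : ℕ) ≤ 2 * k := by omega
      push_cast [this]
      ring
    rw [hcast] at haux
    -- B = A * (k-1) / (n - k + 1)
    have hBval : B * ((n : ℝ) - k + 1) = A * ((k : ℝ) - 1) := by linarith [hidR]
    -- suffices: (2k-1) * B ≤ (2k-1)(k-1)/(n-2k+1) * A
    have hfinal : (2 * (k : ℝ) - 1) * B ≤ (2 * (k : ℝ) - 1) * ((k : ℝ) - 1) / ((n : ℝ) - 2 * k + 1) * A := by
      rw [div_mul_eq_mul_div, le_div_iff₀ hden1]
      have hkk : (0 : ℝ) ≤ 2 * (k : ℝ) - 1 := by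
        have : (1 : ℝ) ≤ k := by exact_mod_cast hk
        linarith
      have hkm1 : (0 : ℝ) ≤ (k : ℝ) - 1 := by
        have : (1 : ℝ) ≤ k := by exact_mod_cast hk
        linarith
      -- B * (n-2k+1) ≤ B * (n-k+1) = A * (k-1)
      have step1 : B * ((n : ℝ) - 2 * k + 1) ≤ B * ((n : ℝ) - k + 1) := by
        apply mul_le_mul_of_nonneg_left _ hBnn
        have : (1 : ℝ) ≤ k := by exact_mod_cast hk
        linarith
      nlinarith [step1, hBval, hkk]
    calc ((n - 2 * k).choose (k - 1) : ℝ)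
        ≥ A - (2 * (k : ℝ) - 1) * B := haux
      _ ≥ A - (2 * (k : ℝ) - 1) * ((k : ℝ) - 1) / ((n : ℝ) - 2 * k + 1) * A := by linarith
      _ = (1 - (2 * (k : ℝ) - 1) * ((k : ℝ) - 1) / ((n : ℝ) - 2 * k + 1)) * A := by ring
end
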